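/- arXiv:2411.05713 — 2 statements merged into one kernel-verified Lean document; each statement's English description precedes it below -/
import Mathlib

section
/- A partition π is popular if and only if for all Pareto-optimal partitions π' it holds that φ(π, π') ≥ 0. -/
/-- A partition of the agent set `N` into coalitions: each agent `i` is assigned
the coalition `part i` containing her, and coalitions of members coincide. -/
structure HPartition (N : Type*) [Fintype N] [DecidableEq N] where
  part : N → Finset N
  mem_self : ∀ i, i ∈ part i
  eq_of_mem : ∀ i j, j ∈ part i → part j = part i

open Classical in
/-- Popularity margin `φ(π, π')`: number of agents strictly preferring `π`
minus the number strictly preferring `π'`. -/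
noncomputable def margin {N : Type*} [Fintype N] [DecidableEq N]
    (u : N → Finset N → ℝ) (π π' : HPartition N) : ℤ :=
  ((Finset.univ.filter fun i : N => u i (π'.part i) < u i (π.part i)).card : ℤ) -
  ((Finset.univ.filter fun i : N => u i (π.part i) < u i (π'.part i)).card : ℤ)

/-- A partition is popular if it never loses a pairwise vote. -/
def Popular {N : Type*} [Fintype N] [DecidableEq N]
    (u : N → Finset N → ℝ) (π : HPartition N) : Prop :=
  ∀ π' : HPartition N, 0 ≤ margin u π π'

/-- A partition is Pareto-optimal if no partition weakly improves every agent
and strictly improves some agent. -/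
def ParetoOptimal {N : Type*} [Fintype N] [DecidableEq N]
    (u : N → Finset N → ℝ) (π : HPartition N) : Prop :=
  ¬ ∃ π' : HPartition N,
      (∀ i, u i (π.part i) ≤ u i (π'.part i)) ∧ ∃ i, u i (π.part i) < u i (π'.part i)

lemma HPartition.part_injective {N : Type*} [Fintype N] [DecidableEq N] :
    Function.Injective (HPartition.part (N := N)) := by
  rintro ⟨p, _, _⟩ ⟨q, _, _⟩ h
  simpa using h

noncomputable instance {N : Type*} [Fintype N] [DecidableEq N] : Fintype (HPartition N) :=
  Fintype.ofInjective _ HPartition.part_injective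

open Classical in
lemma exists_pareto_dominating {N : Type*} [Fintype N] [DecidableEq N]
    (u : N → Finset N → ℝ) (π' : HPartition N) :
    ∃ π'' : HPartition N, ParetoOptimal u π'' ∧
      ∀ i, u i (π'.part i) ≤ u i (π''.part i) := by
  classical
  set s : Finset (HPartition N) :=
    Finset.univ.filter (fun σ => ∀ i, u i (π'.part i) ≤ u i (σ.part i)) with hs
  have hne : s.Nonempty := ⟨π', by simp [hs]⟩
  obtain ⟨σ, hσs, hσmax⟩ := s.exists_max_image (fun σ => ∑ i, u i (σ.part i)) hne
  have hσdom : ∀ i, u i (π'.part i) ≤ u i (σ.part i) := by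
    simpa [hs] using hσs
  refine ⟨σ, ?_, hσdom⟩
  rintro ⟨τ, hweak, j, hstrict⟩
  have hτs : τ ∈ s := by
    simp only [hs, Finset.mem_filter, Finset.mem_univ, true_and]
    exact fun i => le_trans (hσdom i) (hweak i)
  have hle := hσmax τ hτs
  have : ∑ i, u i (σ.part i) < ∑ i, u i (τ.part i) := by
    apply Finset.sum_lt_sum (fun i _ => hweak i) ⟨j, Finset.mem_univ j, hstrict⟩
  linarith

open Classical in
lemma margin_le_of_dominates {N : Type*} [Fintype N] [DecidableEq N]
    (u : N → Finset N → ℝ) (π π' π'' : HPartition N)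
    (h : ∀ i, u i (π'.part i) ≤ u i (π''.part i)) :
    margin u π π'' ≤ margin u π π' := by
  classical
  unfold margin
  have h1 : (Finset.univ.filter fun i : N => u i (π''.part i) < u i (π.part i)) ⊆
      (Finset.univ.filter fun i : N => u i (π'.part i) < u i (π.part i)) := by
    intro i hi
    simp only [Finset.mem_filter, Finset.mem_univ, true_and] at hi ⊢
    exact lt_of_le_of_lt (h i) hi
  have h2 : (Finset.univ.filter fun i : N => u i (π.part i) < u i (π'.part i)) ⊆
      (Finset.univ.filter fun i : N => u i (π.part i) < u i (π''.part i)) := by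
    intro i hi
    simp only [Finset.mem_filter, Finset.mem_univ, true_and] at hi ⊢
    exact lt_of_lt_of_le hi (h i)
  have c1 := Finset.card_le_card h1
  have c2 := Finset.card_le_card h2
  have c1' : ((Finset.univ.filter fun i : N => u i (π''.part i) < u i (π.part i)).card : ℤ) ≤
      ((Finset.univ.filter fun i : N => u i (π'.part i) < u i (π.part i)).card : ℤ) :=
    Int.ofNat_le.mpr c1
  have c2' : ((Finset.univ.filter fun i : N => u i (π.part i) < u i (π'.part i)).card : ℤ) ≤
      ((Finset.univ.filter fun i : N => u i (π.part i) < u i (π''.part i)).card : ℤ) :=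
    Int.ofNat_le.mpr c2
  omega

/-- A partition is popular iff it does not lose against any Pareto-optimal partition. -/
theorem popular_iff_margin_nonneg_on_pareto_optimal {N : Type*} [Fintype N] [DecidableEq N]
    (u : N → Finset N → ℝ) (π : HPartition N) :
    Popular u π ↔ ∀ π' : HPartition N, ParetoOptimal u π' → 0 ≤ margin u π π' := by
  constructor
  · exact fun h π' _ => h π'
  · intro h π'
    obtain ⟨π'', hPO, hdom⟩ := exists_pareto_dominating u π'
    exact le_trans (h π'' hPO) (margin_le_of_dominates u π π' π'' hdom)
end

section
/- Consider the fractional hedonic game induced by a star with center r and k = 6 leaves ℓ1,…,ℓ6, where r assigns value 1 to each leaf, each leaf assigns value 1 to r and 0 to every other leaf, and r’s value is 0 for itself. This game admits no popular partition. -/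
/-- Fractional hedonic game utility of agent `i` in coalition `S`. -/
noncomputable def fhgU {N : Type*} [DecidableEq N] (v : N → N → ℝ) (i : N) (S : Finset N) : ℝ :=
  (∑ j ∈ S.erase i, v i j) / (S.card : ℝ)

/-- Star valuations on 7 agents: agent 0 is the center `r`, agents 1..6 are leaves. -/
noncomputable def starV7 : Fin 7 → Fin 7 → ℝ := fun i j =>
  if i = 0 ∧ j ≠ 0 then 1 else if i ≠ 0 ∧ j = 0 then 1 else 0

/-!
Let `S` be the coalition of the center, with `n` members. If `n ≤ 4`, the center and every agent
outside `S` strictly prefer the grand coalition, while only the `n - 1` leaves of `S` can object: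
`n - 1 < 7 - (n - 1)`. If `n ≥ 5`, pick a leaf `a ∈ S` and pass to `S \ {a}` (everyone else alone):
the other `n - 2` leaves of `S` now share the center with fewer agents and gain, agents outside `S`
stay at utility `0`, and only the center and `a` can object: `2 < n - 2`.
-/

open Finset

namespace HPartition

variable {N : Type*} [Fintype N] [DecidableEq N]

theorem mem_part_symm (π : HPartition N) {i j : N} (h : j ∈ π.part i) : i ∈ π.part j :=
  π.eq_of_mem i j h ▸ π.mem_self i

def grand : HPartition N where
  part _ := univ
  mem_self := mem_univ
  eq_of_mem _ _ _ := rfl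

def ofCoalition (T : Finset N) : HPartition N where
  part i := if i ∈ T then T else {i}
  mem_self i := by split_ifs with h <;> simp [h]
  eq_of_mem i j hj := by
    by_cases hi : i ∈ T <;> simp_all

@[simp]
theorem part_ofCoalition_of_mem {T : Finset N} {i : N} (hi : i ∈ T) :
    (ofCoalition T).part i = T := if_pos hi

@[simp]
theorem part_ofCoalition_of_notMem {T : Finset N} {i : N} (hi : i ∉ T) :
    (ofCoalition T).part i = {i} := if_neg hi

end HPartition

section Margin

variable {N : Type*} [Fintype N] [DecidableEq N]

theorem margin_neg_of_card_lt {u : N → Finset N → ℝ} {π π' : HPartition N} {A B : Finset N}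
    (hA : ∀ i, u i (π'.part i) < u i (π.part i) → i ∈ A)
    (hB : ∀ i ∈ B, u i (π.part i) < u i (π'.part i)) (hAB : #A < #B) :
    margin u π π' < 0 := by
  classical
  have hπ : #{i | u i (π'.part i) < u i (π.part i)} ≤ #A :=
    card_le_card fun i hi => hA i (mem_filter.1 hi).2
  have hπ' : #B ≤ #{i | u i (π.part i) < u i (π'.part i)} :=
    card_le_card fun i hi => mem_filter.2 ⟨mem_univ i, hB i hi⟩
  unfold margin
  omega

end Margin

theorem fhgU_singleton {N : Type*} [DecidableEq N] (v : N → N → ℝ) (i : N) :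
    fhgU v i {i} = 0 := by
  simp [fhgU]

structure IsStar {N : Type*} (v : N → N → ℝ) (c : N) : Prop where
  center_leaf : ∀ j ≠ c, v c j = 1
  leaf_center : ∀ i ≠ c, v i c = 1
  leaf_leaf : ∀ i j, i ≠ c → j ≠ c → v i j = 0

namespace IsStar

variable {N : Type*} [DecidableEq N] {v : N → N → ℝ} {c i : N} {T : Finset N}

theorem fhgU_center (hv : IsStar v c) (hT : c ∈ T) : fhgU v c T = 1 - 1 / #T := by
  have hsum : ∑ j ∈ T.erase c, v c j = #(T.erase c) := by
    rw [sum_congr rfl fun j hj => hv.center_leaf j (ne_of_mem_erase hj)]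
    simp
  have hT0 : (#T : ℝ) ≠ 0 := by exact_mod_cast (card_pos.2 ⟨c, hT⟩).ne'
  rw [fhgU, hsum, card_erase_of_mem hT, Nat.cast_pred (card_pos.2 ⟨c, hT⟩), sub_div, div_self hT0]

theorem fhgU_leaf (hv : IsStar v c) (hi : i ≠ c) (hT : c ∈ T) : fhgU v i T = 1 / #T := by
  rw [fhgU, sum_eq_single_of_mem c (mem_erase.2 ⟨hi.symm, hT⟩)
    fun j hj hjc => hv.leaf_leaf i j hi hjc, hv.leaf_center i hi]

theorem fhgU_eq_zero (hv : IsStar v c) (hi : i ≠ c) (hT : c ∉ T) : fhgU v i T = 0 := by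
  rw [fhgU, sum_eq_zero fun j hj =>
    hv.leaf_leaf i j hi (ne_of_mem_of_not_mem (mem_of_mem_erase hj) hT), zero_div]

variable [Fintype N]

theorem margin_grand_neg (hv : IsStar v c) (π : HPartition N)
    (hS : #(π.part c) < Fintype.card N) (hS2 : 2 * #(π.part c) < Fintype.card N + 2) :
    margin (fhgU v) π .grand < 0 := by
  set S := π.part c
  have hc : c ∈ S := π.mem_self c
  have hgain : ∀ i ∈ (S.erase c)ᶜ, fhgU v i (π.part i) < fhgU v i (HPartition.grand.part i) := by
    intro i hi
    simp only [HPartition.grand]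
    rw [mem_compl, mem_erase, not_and_or, not_not] at hi
    obtain rfl | hiS := hi
    · rw [hv.fhgU_center hc, hv.fhgU_center (mem_univ i), card_univ]
      gcongr
      exact_mod_cast card_pos.2 ⟨i, hc⟩
    · have hic : i ≠ c := by rintro rfl; exact hiS hc
      rw [hv.fhgU_eq_zero hic fun h => hiS (π.mem_part_symm h), hv.fhgU_leaf hic (mem_univ c),
        card_univ]
      exact one_div_pos.2 (by exact_mod_cast Fintype.card_pos_iff.2 ⟨c⟩)
  refine margin_neg_of_card_lt (A := S.erase c) (fun i hi => ?_) hgain ?_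
  · by_contra h
    exact (hgain i (mem_compl.2 h)).not_gt hi
  · rw [card_compl, card_erase_of_mem hc]
    omega

theorem margin_ofCoalition_erase_neg (hv : IsStar v c) (π : HPartition N) {a : N}
    (ha : a ∈ π.part c) (hac : a ≠ c) (hS : 5 ≤ #(π.part c)) :
    margin (fhgU v) π (.ofCoalition ((π.part c).erase a)) < 0 := by
  set S := π.part c
  set T := S.erase a
  have hcT : c ∈ T := mem_erase.2 ⟨hac.symm, π.mem_self c⟩
  have hT : #T = #S - 1 := card_erase_of_mem ha
  have hgain : ∀ i ∈ T.erase c,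
      fhgU v i (π.part i) < fhgU v i ((HPartition.ofCoalition T).part i) := by
    intro i hi
    have hiT := mem_of_mem_erase hi
    rw [HPartition.part_ofCoalition_of_mem hiT, π.eq_of_mem c i (mem_of_mem_erase hiT),
      hv.fhgU_leaf (ne_of_mem_erase hi) (π.mem_self c), hv.fhgU_leaf (ne_of_mem_erase hi) hcT]
    gcongr
    · exact_mod_cast card_pos.2 ⟨c, hcT⟩
    · exact erase_ssubset ha
  refine margin_neg_of_card_lt (A := {c, a}) (fun i hi => ?_) hgain ?_
  · by_contra h
    simp only [mem_insert, mem_singleton, not_or] at h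
    by_cases hiS : i ∈ S
    · exact (hgain i (mem_erase.2 ⟨h.1, mem_erase.2 ⟨h.2, hiS⟩⟩)).not_gt hi
    · rw [HPartition.part_ofCoalition_of_notMem fun hiT => hiS (mem_of_mem_erase hiT),
        fhgU_singleton, hv.fhgU_eq_zero h.1 fun h => hiS (π.mem_part_symm h)] at hi
      exact hi.false
  · rw [card_erase_of_mem hcT, hT, card_pair hac.symm]
    omega

theorem not_popular (hv : IsStar v c) (hN : 7 ≤ Fintype.card N) (π : HPartition N) :
    ¬ Popular (fhgU v) π := by
  intro hπ
  by_cases hS : #(π.part c) ≤ 4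
  · exact (hv.margin_grand_neg π (by omega) (by omega)).not_ge (hπ _)
  · obtain ⟨a, ha⟩ : ((π.part c).erase c).Nonempty := by
      rw [← card_pos, card_erase_of_mem (π.mem_self c)]
      omega
    exact (hv.margin_ofCoalition_erase_neg π (mem_of_mem_erase ha) (ne_of_mem_erase ha)
      (by omega)).not_ge (hπ _)

end IsStar

theorem isStar_starV7 : IsStar starV7 0 where
  center_leaf j hj := by simp [starV7, hj]
  leaf_center i hi := by simp [starV7, hi]
  leaf_leaf i j hi hj := by simp [starV7, hi, hj]

/-- The FHG induced by a star with six leaves admits no popular partition. -/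
theorem fhg_star6_no_popular_partition :
    ¬ ∃ π : HPartition (Fin 7), Popular (fhgU starV7) π := by
  rintro ⟨π, hπ⟩
  exact isStar_starV7.not_popular (by simp) π hπ
end
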